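/- arXiv:2409.04911 — 2 statements merged into one kernel-verified Lean document; each statement's English description precedes it below -/
import Mathlib

section
/- Let N be a d×d real symmetric positive definite matrix and E ∈ ℝ^d. Then Eᵀ N⁻¹ E = sup over pairs (Z, M) with Z ∈ ℝ^d, M a symmetric d×d matrix satisfying M ⪰ Z⊗Z, of the quantity 2 E·Z − tr(N M). -/
/-!
For `M ⪰ Z ⊗ Z` we have `tr(NM) ≥ tr(N (Z ⊗ Z)) = Zᵀ N Z`, because the trace of a product of
two positive semidefinite matrices is nonnegative. So every value `2 E·Z − tr(NM)` is at most
`2 E·Z − Zᵀ N Z`, a concave quadratic in `Z` whose maximum `Eᵀ N⁻¹ E` is attained at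
`Z = N⁻¹ E`; taking `M = Z ⊗ Z` there shows the supremum is a maximum.
-/

open Matrix

open scoped ComplexOrder MatrixOrder in
theorem Matrix.PosSemidef.trace_mul_nonneg {n 𝕜 : Type*} [Fintype n] [DecidableEq n] [RCLike 𝕜]
    {A B : Matrix n n 𝕜} (hA : A.PosSemidef) (hB : B.PosSemidef) : 0 ≤ (A * B).trace := by
  obtain ⟨C, rfl⟩ := CStarAlgebra.nonneg_iff_eq_star_mul_self.mp hB.nonneg
  rw [← Matrix.mul_assoc, trace_mul_comm, ← Matrix.mul_assoc]
  exact (hA.mul_mul_conjTranspose_same C).trace_nonneg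

theorem Matrix.trace_mul_vecMulVec_self {n R : Type*} [Fintype n] [CommSemiring R]
    (A : Matrix n n R) (x : n → R) : (A * vecMulVec x x).trace = x ⬝ᵥ A *ᵥ x := by
  rw [mul_vecMulVec, trace_vecMulVec, dotProduct_comm]

namespace Matrix.PosDef

variable {n : Type*} [Fintype n] [DecidableEq n] {N : Matrix n n ℝ}

theorem mulVec_inv_mulVec (hN : N.PosDef) (E : n → ℝ) : N *ᵥ (N⁻¹ *ᵥ E) = E := by
  rw [mulVec_mulVec, mul_nonsing_inv _ ((isUnit_iff_isUnit_det N).mp hN.isUnit), one_mulVec]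

/-- Completing the square: the difference is `(Z - N⁻¹E)ᵀ N (Z - N⁻¹E) ≥ 0`. -/
theorem two_mul_dotProduct_sub_le (hN : N.PosDef) (E Z : n → ℝ) :
    2 * (E ⬝ᵥ Z) - Z ⬝ᵥ N *ᵥ Z ≤ E ⬝ᵥ N⁻¹ *ᵥ E := by
  set Z₀ := N⁻¹ *ᵥ E
  have hNZ₀ : N *ᵥ Z₀ = E := hN.mulVec_inv_mulVec E
  have hsymm : Z₀ ⬝ᵥ N *ᵥ Z = Z ⬝ᵥ N *ᵥ Z₀ := by
    rw [dotProduct_mulVec, ← mulVec_transpose, ← conjTranspose_eq_transpose_of_trivial,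
      hN.isHermitian.eq, dotProduct_comm]
  have hsq := hN.posSemidef.dotProduct_mulVec_nonneg (Z - Z₀)
  rw [star_trivial, mulVec_sub, dotProduct_sub, sub_dotProduct, sub_dotProduct, hsymm, hNZ₀,
    dotProduct_comm Z₀ E, dotProduct_comm Z E] at hsq
  linarith

end Matrix.PosDef

theorem stmt_3_general (d : ℕ) (N : Matrix (Fin d) (Fin d) ℝ) (hNpos : N.PosDef)
    (E : Fin d → ℝ) :
    IsLUB {r : ℝ | ∃ (Z : Fin d → ℝ) (M : Matrix (Fin d) (Fin d) ℝ),
        M.IsSymm ∧ (M - Matrix.vecMulVec Z Z).PosSemidef ∧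
        r = 2 * (E ⬝ᵥ Z) - (N * M).trace}
      (E ⬝ᵥ N⁻¹ *ᵥ E) := by
  refine IsGreatest.isLUB ⟨?_, ?_⟩
  · set Z₀ := N⁻¹ *ᵥ E
    refine ⟨Z₀, vecMulVec Z₀ Z₀, transpose_vecMulVec Z₀ Z₀, by simpa using PosSemidef.zero, ?_⟩
    rw [trace_mul_vecMulVec_self, hNpos.mulVec_inv_mulVec, dotProduct_comm Z₀ E]
    ring
  · rintro r ⟨Z, M, -, hMZ, rfl⟩
    have htrace := hNpos.posSemidef.trace_mul_nonneg hMZ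
    rw [mul_sub, trace_sub, trace_mul_vecMulVec_self] at htrace
    linarith [hNpos.two_mul_dotProduct_sub_le E Z]

theorem stmt_3 (d : ℕ) (N : Matrix (Fin d) (Fin d) ℝ) (hN : N.IsSymm) (hNpos : N.PosDef)
    (E : Fin d → ℝ) :
    IsLUB {r : ℝ | ∃ (Z : Fin d → ℝ) (M : Matrix (Fin d) (Fin d) ℝ),
        M.IsSymm ∧ (M - Matrix.vecMulVec Z Z).PosSemidef ∧
        r = 2 * (E ⬝ᵥ Z) - (N * M).trace}
      (E ⬝ᵥ N⁻¹ *ᵥ E) :=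
  stmt_3_general d N hNpos E
end

section
/- For a real symmetric positive definite d×d matrix N, the function E ↦ Eᵀ N⁻¹ E is convex on ℝ^d, and the map (E, N) ↦ Eᵀ N⁻¹ E is jointly convex on ℝ^d × {symmetric positive definite matrices}. -/
open Matrix

/-!
Completing the square, `0 ≤ (N⁻¹E - z) ⬝ N (N⁻¹E - z)`, gives
`E ⬝ N⁻¹ E = sup_z (2 z ⬝ E - z ⬝ N z)` with the supremum attained at `z = N⁻¹ E`.
Each function under the supremum is linear in the pair `(E, N)`, so the supremum is jointly
convex; convexity in `E` for a fixed `N` is its restriction to a slice.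
-/

theorem ConvexOn.of_forall_le_of_exists_eq {𝕜 E β ι : Type*} [Semiring 𝕜] [PartialOrder 𝕜]
    [AddCommMonoid E] [AddCommMonoid β] [PartialOrder β] [IsOrderedAddMonoid β] [SMul 𝕜 E]
    [Module 𝕜 β] [PosSMulMono 𝕜 β] {s : Set E} {f : E → β} {g : ι → E → β}
    (hs : Convex 𝕜 s) (hg : ∀ i, ConvexOn 𝕜 s (g i)) (hle : ∀ i, ∀ x ∈ s, g i x ≤ f x)
    (heq : ∀ x ∈ s, ∃ i, g i x = f x) : ConvexOn 𝕜 s f := by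
  refine ⟨hs, fun x hx y hy a b ha hb hab => ?_⟩
  obtain ⟨i, hi⟩ := heq _ (hs hx hy ha hb hab)
  calc f (a • x + b • y) = g i (a • x + b • y) := hi.symm
    _ ≤ a • g i x + b • g i y := (hg i).2 hx hy ha hb hab
    _ ≤ a • f x + b • f y := by gcongr <;> exact hle i _ ‹_›

theorem ConvexOn.comp_prodMk_right {𝕜 E F β : Type*} [Semiring 𝕜] [PartialOrder 𝕜]
    [AddCommMonoid E] [AddCommMonoid F] [AddCommMonoid β] [PartialOrder β] [Module 𝕜 E]
    [Module 𝕜 F] [SMul 𝕜 β] {s : Set (E × F)} {f : E × F → β} (hf : ConvexOn 𝕜 s f) (y : F) :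
    ConvexOn 𝕜 {x | (x, y) ∈ s} (fun x => f (x, y)) := by
  have hcombo : ∀ {x x' : E} {a b : 𝕜}, a + b = 1 →
      a • (x, y) + b • (x', y) = (a • x + b • x', y) := fun hab => by
    rw [Prod.smul_mk, Prod.smul_mk, Prod.mk_add_mk, Convex.combo_self hab]
  refine ⟨fun x hx x' hx' a b ha hb hab => ?_, fun x hx x' hx' a b ha hb hab => ?_⟩
  · simpa only [Set.mem_ofPred_eq, hcombo hab] using hf.1 hx hx' ha hb hab
  · simpa only [hcombo hab] using hf.2 hx hx' ha hb hab

namespace Matrix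

variable {n : Type*}

theorem PosDef.isSymm {N : Matrix n n ℝ} (hN : N.PosDef) : N.IsSymm :=
  isHermitian_iff_isSymm.mp hN.isHermitian

theorem convex_setOf_posDef : Convex ℝ {N : Matrix n n ℝ | N.PosDef} :=
  convex_iff_forall_pos.mpr fun _ hN _ hM _ _ ha hb _ => (hN.smul ha).add (hM.smul hb)

variable [Fintype n]

theorem IsSymm.dotProduct_mulVec_comm {R : Type*} [CommSemiring R] {N : Matrix n n R}
    (hN : N.IsSymm) (u v : n → R) : u ⬝ᵥ N *ᵥ v = v ⬝ᵥ N *ᵥ u := by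
  rw [dotProduct_mulVec, ← mulVec_transpose, hN.eq, dotProduct_comm]

def tangentMinorant (z : n → ℝ) : (n → ℝ) × Matrix n n ℝ →ₗ[ℝ] ℝ where
  toFun p := 2 * (z ⬝ᵥ p.1) - z ⬝ᵥ p.2 *ᵥ z
  map_add' p q := by
    simp only [Prod.fst_add, Prod.snd_add, dotProduct_add, add_mulVec]
    ring
  map_smul' c p := by
    simp only [Prod.smul_fst, Prod.smul_snd, dotProduct_smul, smul_mulVec, smul_eq_mul,
      RingHom.id_apply]
    ring

variable [DecidableEq n]

theorem two_mul_dotProduct_inv_mulVec_sub {R : Type*} [CommRing R] {N : Matrix n n R}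
    (hN : IsUnit N.det) (E : n → R) :
    2 * ((N⁻¹ *ᵥ E) ⬝ᵥ E) - (N⁻¹ *ᵥ E) ⬝ᵥ N *ᵥ (N⁻¹ *ᵥ E) = E ⬝ᵥ N⁻¹ *ᵥ E := by
  rw [mulVec_mulVec, mul_nonsing_inv N hN, one_mulVec, dotProduct_comm]
  ring

theorem PosDef.two_mul_dotProduct_sub_le_s7 {N : Matrix n n ℝ} (hN : N.PosDef) (E z : n → ℝ) :
    2 * (z ⬝ᵥ E) - z ⬝ᵥ N *ᵥ z ≤ E ⬝ᵥ N⁻¹ *ᵥ E := by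
  set w := N⁻¹ *ᵥ E
  have hNw : N *ᵥ w = E := by
    rw [mulVec_mulVec, mul_nonsing_inv N hN.det_pos.ne'.isUnit, one_mulVec]
  have hsq : 0 ≤ (w - z) ⬝ᵥ N *ᵥ (w - z) := by
    simpa only [star_trivial] using hN.posSemidef.dotProduct_mulVec_nonneg (w - z)
  have hcross : w ⬝ᵥ N *ᵥ z = z ⬝ᵥ E := by rw [← hNw, hN.isSymm.dotProduct_mulVec_comm]
  rw [mulVec_sub, sub_dotProduct, dotProduct_sub, dotProduct_sub, hNw] at hsq
  rw [dotProduct_comm E w]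
  linarith

theorem convexOn_dotProduct_inv_mulVec :
    ConvexOn ℝ {p : (n → ℝ) × Matrix n n ℝ | p.2.PosDef} (fun p => p.1 ⬝ᵥ p.2⁻¹ *ᵥ p.1) := by
  have hconv : Convex ℝ {p : (n → ℝ) × Matrix n n ℝ | p.2.PosDef} :=
    convex_setOf_posDef.linear_preimage (LinearMap.snd ℝ _ _)
  refine .of_forall_le_of_exists_eq hconv (fun z => (tangentMinorant z).convexOn hconv)
    (fun z p hp => hp.two_mul_dotProduct_sub_le_s7 p.1 z) fun p hp => ⟨p.2⁻¹ *ᵥ p.1, ?_⟩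
  exact two_mul_dotProduct_inv_mulVec_sub hp.det_pos.ne'.isUnit p.1

end Matrix

theorem stmt_7 (d : ℕ) :
    (∀ N : Matrix (Fin d) (Fin d) ℝ, N.IsSymm → N.PosDef →
      ConvexOn ℝ Set.univ (fun E : Fin d → ℝ => E ⬝ᵥ N⁻¹ *ᵥ E)) ∧
    ConvexOn ℝ
      {p : (Fin d → ℝ) × Matrix (Fin d) (Fin d) ℝ | p.2.IsSymm ∧ p.2.PosDef}
      (fun p : (Fin d → ℝ) × Matrix (Fin d) (Fin d) ℝ => p.1 ⬝ᵥ p.2⁻¹ *ᵥ p.1) := by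
  have hset : {p : (Fin d → ℝ) × Matrix (Fin d) (Fin d) ℝ | p.2.IsSymm ∧ p.2.PosDef} =
      {p | p.2.PosDef} :=
    Set.ext fun p => and_iff_right_of_imp PosDef.isSymm
  rw [hset]
  refine ⟨fun N _ hN => ?_, convexOn_dotProduct_inv_mulVec⟩
  exact (convexOn_dotProduct_inv_mulVec.comp_prodMk_right N).subset (fun _ _ => hN) convex_univ
end
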